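/- Let w ∈ S_n and suppose the poset M_w is self-dual, i.e., there exists a bijection φ : M_w → M_w such that for all z, z' ∈ M_w, z ≤ z' (in the product order) if and only if φ(z') ≤ φ(z). Then the weak order interval Λ_w is rank-symmetric: for every k, |{v ∈ S_n : v ≤_L w, ℓ(v) = k}| = |{v ∈ S_n : v ≤_L w, ℓ(v) = ℓ(w) − k}|. -/

import Mathlib

/-!
Sending `v ≤_L w` to the set of `z ∈ M_w` with `z ≤ c(v)` is a bijection from `Λ_w` onto the
lower sets of `M_w`, and the lower set of `v` has `ℓ(v)` elements, because for `v ≤_L w` one has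
`b_{i,x}(w) ≤ c(v)` iff `x ≤ c_i(v)` (Theorem A). Surjectivity rests on the description of `Λ_w`
by codes: `v ≤_L w` iff `c_i(v) ≤ c_j(v) + m_{i,j}(w)` whenever `i ≤ j` and `w i ≤ w j`.
An anti-automorphism `φ` of `M_w` turns complements of lower sets of size `k` into lower sets of
size `|M_w| - k = ℓ(w) - k`.
-/

/-- The inversion set of `w`: pairs of positions `(i,j)` with `i < j` and `w i > w j`. -/
def Invs {n : ℕ} (w : Equiv.Perm (Fin n)) : Finset (Fin n × Fin n) :=
  Finset.univ.filter (fun p => p.1 < p.2 ∧ w p.2 < w p.1)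

/-- The length (number of inversions) of `w`. -/
def len {n : ℕ} (w : Equiv.Perm (Fin n)) : ℕ := (Invs w).card

/-- The `i`-th entry of the Lehmer code of `w`. -/
def lehmer {n : ℕ} (w : Equiv.Perm (Fin n)) (i : Fin n) : ℕ :=
  ((Invs w).filter (fun p => p.1 = i)).card

/-- The extended Lehmer code `m_{i,j}(w)`: the number of inversions `(i,k)` with `k < j`. -/
def mext {n : ℕ} (w : Equiv.Perm (Fin n)) (i : Fin n) (j : Fin (n + 1)) : ℕ :=
  ((Invs w).filter (fun p => p.1 = i ∧ (p.2 : ℕ) < (j : ℕ))).card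

/-- The left weak order: `v ≤_L w` iff `inv(v) ⊆ inv(w)`. -/
def leftWeak {n : ℕ} (v w : Equiv.Perm (Fin n)) : Prop := Invs v ⊆ Invs w

/-- The value of `w` extended to `Fin (n+1)` by fixing the last point
(the `1`-indexed convention `w(n+1) = n+1` becomes `wval w n = n` here). -/
def wval {n : ℕ} (w : Equiv.Perm (Fin n)) (j : Fin (n + 1)) : ℕ :=
  if h : (j : ℕ) < n then (w ⟨j, h⟩ : ℕ) else n

/-- The set of non-inversions of `w`: pairs `(i,j)` with `i ≤ j ≤ n+1` and `w i ≤ w j`,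
where `w` is extended by fixing the last point. -/
def Ninvs {n : ℕ} (w : Equiv.Perm (Fin n)) : Finset (Fin n × Fin (n + 1)) :=
  Finset.univ.filter (fun p => (p.1 : ℕ) ≤ (p.2 : ℕ) ∧ (w p.1 : ℕ) ≤ wval w p.2)

/-- The set of Lehmer codes of elements of the weak order interval `Λ_w = [id, w]`. -/
def codeSet {n : ℕ} (w : Equiv.Perm (Fin n)) : Set (Fin n → ℕ) :=
  {x | ∃ v : Equiv.Perm (Fin n), leftWeak v w ∧ lehmer v = x}

/-- The tuple `b_{i,x}(w)`: the `j`-th coordinate is `0` if `j < i` or `(i,j) ∈ inv(w)`,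
and is `max {0, x - m_{i,j}(w)}` (truncated subtraction) if `j ≥ i` and `(i,j) ∈ ninv(w)`. -/
def bmin {n : ℕ} (w : Equiv.Perm (Fin n)) (i : Fin n) (x : ℕ) : Fin n → ℕ :=
  fun j => if (i : ℕ) ≤ (j : ℕ) ∧ (w i : ℕ) ≤ (w j : ℕ) then x - mext w i j.castSucc else 0

/-- The set `M_w` of all `b_{i,x}(w)` for `1 ≤ x ≤ c_i(w)`. -/
def Mset {n : ℕ} (w : Equiv.Perm (Fin n)) : Set (Fin n → ℕ) :=
  {z | ∃ (i : Fin n) (x : ℕ), 1 ≤ x ∧ x ≤ lehmer w i ∧ z = bmin w i x}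

/-- The direct sum `v × w ∈ S_{m+n}` of permutations. -/
def dsum {m n : ℕ} (v : Equiv.Perm (Fin m)) (w : Equiv.Perm (Fin n)) :
    Equiv.Perm (Fin (m + n)) :=
  finSumFinEquiv.permCongr (Equiv.sumCongr v w)

lemma isLowerSet_compl_preimage_of_antitone {α β : Type*} [Preorder α] [Preorder β] {f : α → β}
    (hf : Antitone f) {s : Set β} (hs : IsLowerSet s) : IsLowerSet (f ⁻¹' s)ᶜ :=
  fun _ _ hle ha hb => ha (hs (hf hle) hb)

/-- The bijection is `s ↦ φ '' sᶜ`, written as a preimage under `φ.symm`. -/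
theorem ncard_isLowerSet_eq_of_antitone_equiv {α β : Type*} [Preorder α] [Preorder β]
    [Finite β] (φ : α ≃ β) (hφ : ∀ a a', a ≤ a' ↔ φ a' ≤ φ a) (k : ℕ) :
    {s : Set α | IsLowerSet s ∧ s.ncard = k}.ncard =
      {t : Set β | IsLowerSet t ∧ t.ncard + k = Nat.card β}.ncard := by
  have hanti : Antitone φ := fun a a' h => (hφ a a').1 h
  have hanti' : Antitone φ.symm := fun b b' h => (hφ _ _).2 (by simpa using h)
  have hcard : ∀ s : Set α, (φ.symm ⁻¹' s)ᶜ.ncard + s.ncard = Nat.card β := fun s => by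
    rw [← Set.ncard_image_of_injective s φ.injective, φ.image_eq_preimage_symm, add_comm,
      Set.ncard_add_ncard_compl]
  refine Set.ncard_congr (fun s _ => (φ.symm ⁻¹' s)ᶜ) ?_ ?_ ?_
  · rintro s ⟨hs, rfl⟩
    exact ⟨isLowerSet_compl_preimage_of_antitone hanti' hs, hcard s⟩
  · intro s s' _ _ h
    exact Set.preimage_injective.2 φ.symm.surjective (compl_injective h)
  · rintro t ⟨ht, hk⟩
    refine ⟨(φ ⁻¹' t)ᶜ, ⟨isLowerSet_compl_preimage_of_antitone hanti ht, ?_⟩, ?_⟩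
    · have := hcard (φ ⁻¹' t)ᶜ
      rw [Set.preimage_compl, compl_compl, φ.symm_preimage_preimage] at this
      omega
    · simp only [Set.preimage_compl, compl_compl, φ.symm_preimage_preimage]

section LehmerCode

open Finset

variable {n : ℕ}

lemma mem_Invs {v : Equiv.Perm (Fin n)} {p : Fin n × Fin n} :
    p ∈ Invs v ↔ p.1 < p.2 ∧ v p.2 < v p.1 := by
  simp [Invs]

lemma mext_eq_card (v : Equiv.Perm (Fin n)) (i : Fin n) (j : Fin (n + 1)) :
    mext v i j = #{k | i < k ∧ v k < v i ∧ (k : ℕ) < j} := by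
  rw [mext, eq_comm, ← card_map ⟨Prod.mk i, Prod.mk_right_injective i⟩]
  congr 1
  ext ⟨a, b⟩
  simp only [mem_filter, mem_Invs, mem_map, mem_univ, true_and, Function.Embedding.coeFn_mk,
    Prod.mk.injEq]
  constructor
  · rintro ⟨b, ⟨hab, hv, hb⟩, rfl, rfl⟩
    exact ⟨⟨hab, hv⟩, rfl, hb⟩
  · rintro ⟨⟨hab, hv⟩, rfl, hb⟩
    exact ⟨b, ⟨hab, hv, hb⟩, rfl, rfl⟩

lemma mext_last (v : Equiv.Perm (Fin n)) (i : Fin n) : mext v i (Fin.last n) = lehmer v i := by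
  simp only [mext, lehmer, Fin.val_last, Fin.is_lt, and_true]

lemma lehmer_eq_card (v : Equiv.Perm (Fin n)) (i : Fin n) :
    lehmer v i = #{k | i < k ∧ v k < v i} := by
  simp only [← mext_last, mext_eq_card, Fin.val_last, Fin.is_lt, and_true]

lemma mext_self (v : Equiv.Perm (Fin n)) (i : Fin n) : mext v i i.castSucc = 0 := by
  rw [mext_eq_card, card_eq_zero, filter_eq_empty_iff]
  rintro k - ⟨hik, -, hki⟩
  exact absurd hik (not_lt.2 (Fin.le_def.2 (le_of_lt hki)))

lemma len_eq_sum_lehmer (v : Equiv.Perm (Fin n)) : len v = ∑ i, lehmer v i :=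
  card_eq_sum_card_fiberwise fun p _ => mem_univ p.1

lemma lehmer_lt (v : Equiv.Perm (Fin n)) (i : Fin n) : lehmer v i < n - i := by
  have : lehmer v i ≤ n - 1 - i := by
    rw [lehmer_eq_card, ← Fin.card_Ioi]
    exact card_le_card fun k hk => mem_Ioi.2 (mem_filter.1 hk).2.1
  have := i.is_lt
  omega

lemma lehmer_le_of_leftWeak {v w : Equiv.Perm (Fin n)} (h : leftWeak v w) (i : Fin n) :
    lehmer v i ≤ lehmer w i :=
  card_le_card (filter_subset_filter _ h)

lemma mext_le_of_leftWeak {v w : Equiv.Perm (Fin n)} (h : leftWeak v w) (i : Fin n)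
    (j : Fin (n + 1)) : mext v i j ≤ mext w i j :=
  card_le_card (filter_subset_filter _ h)

/-- Inversions `(i, k)` with `k < j` are counted by `m_{i,j}`; if `v i ≤ v j`, those with
`k > j` are inversions `(j, k)` as well. -/
lemma mext_le_mext_add_mext {v : Equiv.Perm (Fin n)} {i j : Fin n} (hv : v i ≤ v j)
    (K : Fin (n + 1)) : mext v i K ≤ mext v i j.castSucc + mext v j K := by
  simp only [mext_eq_card]
  refine (card_le_card fun k hk => ?_).trans (card_union_le _ _)
  simp only [mem_filter, mem_univ, true_and, mem_union, Fin.val_castSucc] at hk ⊢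
  obtain ⟨hik, hvk, hkK⟩ := hk
  rcases lt_or_ge (k : ℕ) j with hkj | hjk
  · exact Or.inl ⟨hik, hvk, hkj⟩
  · have hkj : k ≠ j := by rintro rfl; exact absurd hv (not_le.2 hvk)
    exact Or.inr ⟨lt_of_le_of_ne (Fin.le_def.2 hjk) hkj.symm, hvk.trans_le hv, hkK⟩

lemma lehmer_le_mext_add_lehmer {v : Equiv.Perm (Fin n)} {i j : Fin n} (hv : v i ≤ v j) :
    lehmer v i ≤ mext v i j.castSucc + lehmer v j := by
  simpa only [mext_last] using mext_le_mext_add_mext hv (Fin.last n)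

lemma mext_add_lehmer_lt_lehmer {v : Equiv.Perm (Fin n)} {i j : Fin n} (hij : i < j)
    (hv : v j < v i) : mext v i j.castSucc + lehmer v j < lehmer v i := by
  set S : Finset (Fin n) := {k | i < k ∧ v k < v i} with hS
  have hsplit := card_filter_add_card_filter_not (s := S) fun k : Fin n => (k : ℕ) < j
  have hlow : #(S.filter fun k : Fin n => (k : ℕ) < j) = mext v i j.castSucc := by
    rw [mext_eq_card, filter_filter]
    simp only [Fin.val_castSucc, and_assoc]
  have hhigh : insert j ({k | j < k ∧ v k < v j} : Finset (Fin n)) ⊆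
      S.filter fun k : Fin n => ¬(k : ℕ) < j := by
    intro k hk
    simp only [hS, mem_insert, mem_filter, mem_univ, true_and, not_lt] at hk ⊢
    rcases hk with rfl | ⟨hjk, hvk⟩
    · exact ⟨⟨hij, hv⟩, le_rfl⟩
    · exact ⟨⟨hij.trans hjk, hvk.trans hv⟩, le_of_lt hjk⟩
  have := card_le_card hhigh
  rw [card_insert_of_notMem (by simp), ← lehmer_eq_card] at this
  rw [lehmer_eq_card v i, ← hS]
  omega

end LehmerCode

section WeakOrder

open Finset

variable {n : ℕ} {v w : Equiv.Perm (Fin n)}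

lemma apply_le_apply_of_leftWeak (h : leftWeak v w) {i j : Fin n} (hij : i ≤ j)
    (hw : w i ≤ w j) : v i ≤ v j := by
  rcases hij.eq_or_lt with rfl | hij
  · exact le_rfl
  by_contra! hv
  exact not_lt.2 hw (mem_Invs.1 (h ((mem_Invs (p := (i, j))).2 ⟨hij, hv⟩))).2

lemma lehmer_le_lehmer_add_mext_of_leftWeak (h : leftWeak v w) {i j : Fin n} (hij : i ≤ j)
    (hw : w i ≤ w j) : lehmer v i ≤ lehmer v j + mext w i j.castSucc := by
  have := lehmer_le_mext_add_lehmer (apply_le_apply_of_leftWeak h hij hw)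
  have := mext_le_of_leftWeak h i j.castSucc
  omega

/-- Induction on `j - i`: if `(i, j)` is an inversion of `v` but not of `w`, the inequality at
`(i, j)` forces `m_{i,j}(v) < m_{i,j}(w)`, and a `k` witnessing this gives an inversion `(k, j)`
of `v` that is not one of `w`. -/
lemma leftWeak_of_lehmer_le_lehmer_add_mext
    (h : ∀ i j : Fin n, i ≤ j → w i ≤ w j → lehmer v i ≤ lehmer v j + mext w i j.castSucc) :
    leftWeak v w := by
  suffices key : ∀ d, ∀ i j : Fin n, (j : ℕ) - i = d → i < j → v j < v i → w j < w i by
    intro p hp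
    obtain ⟨hij, hv⟩ := mem_Invs.1 hp
    exact mem_Invs.2 ⟨hij, key _ p.1 p.2 rfl hij hv⟩
  intro d
  induction d using Nat.strong_induction_on with
  | _ d ih =>
  intro i j hd hij hv
  by_contra! hw
  have hlt : mext v i j.castSucc < mext w i j.castSucc := by
    have := h i j hij.le hw
    have := mext_add_lehmer_lt_lehmer hij hv
    omega
  rw [mext_eq_card, mext_eq_card] at hlt
  obtain ⟨k, hkw, hkv⟩ := exists_mem_notMem_of_card_lt_card hlt
  simp only [mem_filter, mem_univ, true_and, Fin.val_castSucc, not_and, not_lt] at hkw hkv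
  obtain ⟨hik, hwk, hkj⟩ := hkw
  have hvk : v i ≤ v k := le_of_not_gt fun hvk => absurd (hkv hik hvk) (not_le.2 hkj)
  have hwjk := ih (j - k) (by rw [Fin.lt_def] at hij hik; omega) k j rfl (Fin.lt_def.2 hkj)
    (hv.trans_le hvk)
  exact absurd (hwjk.trans hwk) (not_lt.2 hw)

theorem leftWeak_iff_lehmer_le_lehmer_add_mext : leftWeak v w ↔
    ∀ i j : Fin n, i ≤ j → w i ≤ w j → lehmer v i ≤ lehmer v j + mext w i j.castSucc :=
  ⟨fun h _ _ => lehmer_le_lehmer_add_mext_of_leftWeak h, leftWeak_of_lehmer_le_lehmer_add_mext⟩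

lemma val_apply_eq_card_lt (v : Equiv.Perm (Fin n)) (i : Fin n) :
    (v i : ℕ) = #{t | v t < v i} := by
  rw [← Fin.card_Iio (v i)]
  exact card_equiv v.symm fun t => by simp

lemma apply_lt_apply_iff_of_Invs_eq {v' : Equiv.Perm (Fin n)} (h : Invs v = Invs v')
    (t i : Fin n) : v t < v i ↔ v' t < v' i := by
  rcases lt_trichotomy t i with hti | rfl | hit
  · have key : ∀ u : Equiv.Perm (Fin n), u t < u i ↔ (t, i) ∉ Invs u := fun u => by
      rw [mem_Invs, not_and, not_lt]
      exact ⟨fun hlt _ => hlt.le, fun hle => (u.injective.ne hti.ne).lt_of_le (hle hti)⟩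
    rw [key v, key v', h]
  · simp
  · have key : ∀ u : Equiv.Perm (Fin n), u t < u i ↔ (i, t) ∈ Invs u := fun u => by
      simp [mem_Invs, hit]
    rw [key v, key v', h]

lemma Invs_injective : Function.Injective (@Invs n) := fun v v' h =>
  Equiv.ext fun i => Fin.ext <| by
    rw [val_apply_eq_card_lt, val_apply_eq_card_lt]
    exact congrArg card (filter_congr fun t _ => apply_lt_apply_iff_of_Invs_eq h t i)

lemma lehmer_injective : Function.Injective (@lehmer n) := by
  have hle : ∀ u u' : Equiv.Perm (Fin n), lehmer u = lehmer u' → leftWeak u u' := by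
    intro u u' h
    rw [leftWeak_iff_lehmer_le_lehmer_add_mext, h]
    exact leftWeak_iff_lehmer_le_lehmer_add_mext.1 (Subset.refl (Invs u'))
  exact fun v v' h => Invs_injective (Subset.antisymm (hle v v' h) (hle v' v h.symm))

/-- The codes fill the box `∏ i, [0, n - i)`, which has `n!` points. -/
lemma lehmer_surjective {c : Fin n → ℕ} (hc : ∀ i, c i < n - i) :
    ∃ v : Equiv.Perm (Fin n), lehmer v = c := by
  let F : Equiv.Perm (Fin n) → (i : Fin n) → Fin (n - i) :=
    fun v i => ⟨lehmer v i, lehmer_lt v i⟩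
  have hF : Function.Injective F := fun v v' h =>
    lehmer_injective (funext fun i => congrArg Fin.val (congrFun h i))
  have hcard :
      Fintype.card (Equiv.Perm (Fin n)) = Fintype.card ((i : Fin n) → Fin (n - i)) := by
    rw [Fintype.card_perm, Fintype.card_pi, Fintype.card_fin]
    simp only [Fintype.card_fin]
    rw [Fin.prod_univ_eq_prod_range (fun i => n - i), ← Nat.descFactorial_eq_prod_range,
      Nat.descFactorial_self]
  obtain ⟨v, hv⟩ := ((Fintype.bijective_iff_injective_and_card F).2 ⟨hF, hcard⟩).2
    fun i => ⟨c i, hc i⟩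
  exact ⟨v, funext fun i => congrArg Fin.val (congrFun hv i)⟩

end WeakOrder

section CodeVectors

open Finset

variable {n : ℕ} {v w : Equiv.Perm (Fin n)}

lemma bmin_apply_self (w : Equiv.Perm (Fin n)) (i : Fin n) (x : ℕ) : bmin w i x i = x := by
  simp [bmin, mext_self]

lemma bmin_apply_of_lt (w : Equiv.Perm (Fin n)) {i j : Fin n} (x : ℕ) (hji : j < i) :
    bmin w i x j = 0 :=
  if_neg fun h => absurd h.1 (not_le.2 hji)

lemma bmin_mono (w : Equiv.Perm (Fin n)) (i : Fin n) : Monotone (bmin w i) := fun x y hxy j => by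
  dsimp only [bmin]
  split_ifs <;> omega

lemma bmin_inj {i i' : Fin n} {x x' : ℕ} (hx : x ≠ 0) (hx' : x' ≠ 0)
    (h : bmin w i x = bmin w i' x') : i = i' ∧ x = x' := by
  obtain rfl : i = i' := by
    by_contra hne
    rcases lt_or_gt_of_ne hne with hlt | hlt
    · have := congrFun h i
      rw [bmin_apply_self, bmin_apply_of_lt _ _ hlt] at this
      exact hx this
    · have := congrFun h i'
      rw [bmin_apply_self, bmin_apply_of_lt _ _ hlt] at this
      exact hx' this.symm
  exact ⟨rfl, by simpa only [bmin_apply_self] using congrFun h i⟩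

lemma bmin_le_lehmer_iff (h : leftWeak v w) {i : Fin n} {x : ℕ} :
    bmin w i x ≤ lehmer v ↔ x ≤ lehmer v i := by
  refine ⟨fun hle => bmin_apply_self w i x ▸ hle i, fun hx j => ?_⟩
  dsimp only [bmin]
  split_ifs with hij
  · have := lehmer_le_lehmer_add_mext_of_leftWeak h (Fin.le_def.2 hij.1) (Fin.le_def.2 hij.2)
    omega
  · exact Nat.zero_le _

lemma bmin_sub_mext_le_bmin {i j : Fin n} (hij : i ≤ j) (hw : w i ≤ w j) (y : ℕ) :
    bmin w j (y - mext w i j.castSucc) ≤ bmin w i y := fun t => by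
  have := mext_le_mext_add_mext hw t.castSucc
  rw [Fin.le_def] at hij hw
  dsimp only [bmin]
  split_ifs <;> omega

def bvecs (w : Equiv.Perm (Fin n)) (c : Fin n → ℕ) : Set (Fin n → ℕ) :=
  {z | ∃ (i : Fin n) (x : ℕ), 1 ≤ x ∧ x ≤ c i ∧ z = bmin w i x}

lemma bvecs_eq_image (w : Equiv.Perm (Fin n)) (c : Fin n → ℕ) :
    bvecs w c =
      (fun p : (_ : Fin n) × ℕ => bmin w p.1 p.2) '' ↑(univ.sigma fun i => Icc 1 (c i)) := by
  ext z
  simp only [bvecs, Set.mem_image, coe_sigma, Set.mem_sigma_iff, coe_univ,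
    Set.mem_univ, coe_Icc, Set.mem_Icc, true_and, Sigma.exists]
  exact exists₂_congr fun i x => ⟨fun ⟨h1, h2, h⟩ => ⟨⟨h1, h2⟩, h.symm⟩,
    fun ⟨⟨h1, h2⟩, h⟩ => ⟨h1, h2, h.symm⟩⟩

lemma ncard_bvecs (w : Equiv.Perm (Fin n)) (c : Fin n → ℕ) : (bvecs w c).ncard = ∑ i, c i := by
  rw [bvecs_eq_image, Set.InjOn.ncard_image, Set.ncard_coe_finset, card_sigma]
  · simp
  · rintro ⟨i, x⟩ hp ⟨i', x'⟩ hq h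
    simp only [coe_sigma, Set.mem_sigma_iff, coe_Icc, Set.mem_Icc] at hp hq
    obtain ⟨rfl, rfl⟩ := bmin_inj (by omega : x ≠ 0) (by omega : x' ≠ 0) h
    rfl

lemma bvecs_injective (w : Equiv.Perm (Fin n)) : Function.Injective (bvecs w) := by
  have hle : ∀ c c', bvecs w c ⊆ bvecs w c' → c ≤ c' := by
    intro c c' h i
    show c i ≤ c' i
    rcases Nat.eq_zero_or_pos (c i) with hci | hci
    · omega
    obtain ⟨i', x', hx', hxc', heq⟩ := h ⟨i, c i, hci, le_rfl, rfl⟩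
    obtain ⟨rfl, rfl⟩ := bmin_inj (by omega : c i ≠ 0) (by omega : x' ≠ 0) heq
    exact hxc'
  exact fun c c' h => le_antisymm (hle c c' h.le) (hle c' c h.ge)

lemma Mset_eq_bvecs (w : Equiv.Perm (Fin n)) : Mset w = bvecs w (lehmer w) := rfl

lemma Mset_finite (w : Equiv.Perm (Fin n)) : (Mset w).Finite := by
  rw [Mset_eq_bvecs, bvecs_eq_image]
  exact (finite_toSet _).image _

lemma ncard_Mset (w : Equiv.Perm (Fin n)) : (Mset w).ncard = len w :=
  (ncard_bvecs w (lehmer w)).trans (len_eq_sum_lehmer w).symm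

end CodeVectors

section Ideals

variable {n : ℕ} {v w : Equiv.Perm (Fin n)}

def codeIdeal (w v : Equiv.Perm (Fin n)) : Set (Mset w) :=
  {z | (z : Fin n → ℕ) ≤ lehmer v}

lemma isLowerSet_codeIdeal : IsLowerSet (codeIdeal w v) :=
  fun _ _ hle hz => show _ ≤ lehmer v from le_trans hle hz

lemma image_val_codeIdeal (h : leftWeak v w) :
    Subtype.val '' codeIdeal w v = bvecs w (lehmer v) := by
  ext z
  constructor
  · rintro ⟨⟨z, hzM⟩, hz : z ≤ lehmer v, rfl⟩
    obtain ⟨i, x, hx, -, rfl⟩ := hzM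
    exact ⟨i, x, hx, (bmin_le_lehmer_iff h).1 hz, rfl⟩
  · rintro ⟨i, x, hx, hxv, rfl⟩
    exact ⟨⟨_, i, x, hx, hxv.trans (lehmer_le_of_leftWeak h i), rfl⟩,
      (bmin_le_lehmer_iff h).2 hxv, rfl⟩

lemma ncard_codeIdeal (h : leftWeak v w) : (codeIdeal w v).ncard = len v := by
  rw [← Set.ncard_image_of_injective _ Subtype.val_injective, image_val_codeIdeal h,
    ncard_bvecs, len_eq_sum_lehmer]

lemma codeIdeal_injOn : Set.InjOn (codeIdeal w) {v | leftWeak v w} := fun v hv v' hv' h =>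
  lehmer_injective <| bvecs_injective w <| by
    rw [← image_val_codeIdeal hv, ← image_val_codeIdeal hv', h]

/-- The code of the element attached to a lower set `S` records, for each `i`, the largest `x`
with `b_{i,x}(w) ∈ S`. -/
lemma exists_codeIdeal_eq {S : Set (Mset w)} (hS : IsLowerSet S) :
    ∃ v, leftWeak v w ∧ codeIdeal w v = S := by
  classical
  set T := Subtype.val '' S
  have hdown : ∀ j y, 1 ≤ y → y ≤ lehmer w j → ∀ z ∈ T, bmin w j y ≤ z → bmin w j y ∈ T := by
    rintro j y hy hyw _ ⟨z, hz, rfl⟩ hle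
    exact ⟨⟨_, j, y, hy, hyw, rfl⟩, hS hle hz, rfl⟩
  set c : Fin n → ℕ := fun i => Nat.findGreatest (fun x => bmin w i x ∈ T) (lehmer w i)
  have hcw : ∀ i, c i ≤ lehmer w i := fun i => Nat.findGreatest_le _
  have hcT : ∀ i, c i ≠ 0 → bmin w i (c i) ∈ T := fun i => Nat.findGreatest_of_ne_zero rfl
  have hmem : ∀ i x, 1 ≤ x → x ≤ lehmer w i → (bmin w i x ∈ T ↔ x ≤ c i) := by
    intro i x hx hxw
    refine ⟨Nat.le_findGreatest (P := fun x => bmin w i x ∈ T) hxw, fun hxc => ?_⟩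
    exact hdown i x hx hxw _ (hcT i (by omega)) (bmin_mono w i hxc)
  have hc : ∀ i j, i ≤ j → w i ≤ w j → c i ≤ c j + mext w i j.castSucc := by
    intro i j hij hw
    by_contra! hlt
    have hxw : c i - mext w i j.castSucc ≤ lehmer w j := by
      have := (bmin_le_lehmer_iff (Finset.Subset.refl (Invs w))).2 (hcw i) j
      rwa [bmin, if_pos ⟨Fin.le_def.1 hij, Fin.le_def.1 hw⟩] at this
    have := hdown j _ (by omega) hxw _ (hcT i (by omega)) (bmin_sub_mext_le_bmin hij hw (c i))
    have := (hmem j _ (by omega) hxw).1 this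
    omega
  obtain ⟨v, hv⟩ := lehmer_surjective fun i => (hcw i).trans_lt (lehmer_lt w i)
  have hvw : leftWeak v w := leftWeak_iff_lehmer_le_lehmer_add_mext.2 (hv ▸ hc)
  refine ⟨v, hvw, Set.ext fun z => ?_⟩
  obtain ⟨_, i, x, hx, hxw, rfl⟩ := z
  change bmin w i x ≤ lehmer v ↔ _
  rw [bmin_le_lehmer_iff hvw, hv, ← hmem i x hx hxw]
  exact Subtype.val_injective.mem_set_image (a := ⟨_, i, x, hx, hxw, rfl⟩)

theorem ncard_leftWeak_eq_ncard_isLowerSet (w : Equiv.Perm (Fin n)) (P : ℕ → Prop) :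
    {v | leftWeak v w ∧ P (len v)}.ncard = {S : Set (Mset w) | IsLowerSet S ∧ P S.ncard}.ncard :=
  Set.ncard_congr (fun v _ => codeIdeal w v)
    (fun _ ⟨hv, hP⟩ => ⟨isLowerSet_codeIdeal, (ncard_codeIdeal hv).symm ▸ hP⟩)
    (fun _ _ hv hv' h => codeIdeal_injOn hv.1 hv'.1 h)
    (fun _ ⟨hS, hP⟩ =>
      let ⟨v, hv, hvS⟩ := exists_codeIdeal_eq hS
      ⟨v, ⟨hv, ncard_codeIdeal hv ▸ hvS ▸ hP⟩, hvS⟩)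

end Ideals

/-- Proposition 5.1: if the poset `M_w` (a subposet of `ℕ^n` under the product order)
is self-dual, i.e. there is a bijection `φ : M_w → M_w` with `z ≤ z'` iff
`φ z' ≤ φ z`, then the weak order interval `Λ_w` is rank-symmetric: for every `k`,
the number of `v ≤_L w` of length `k` equals the number of `v ≤_L w` of length
`ℓ(w) − k`. -/
theorem selfDual_rank_symmetric {n : ℕ} (w : Equiv.Perm (Fin n))
    (hsd : ∃ φ : Mset w ≃ Mset w,
      ∀ z z' : Mset w, (z : Fin n → ℕ) ≤ (z' : Fin n → ℕ) ↔
        (φ z' : Fin n → ℕ) ≤ (φ z : Fin n → ℕ)) :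
    ∀ k : ℕ,
      {v : Equiv.Perm (Fin n) | leftWeak v w ∧ len v = k}.ncard =
      {v : Equiv.Perm (Fin n) | leftWeak v w ∧ len v + k = len w}.ncard := by
  intro k
  obtain ⟨φ, hφ⟩ := hsd
  have : Finite (Mset w) := (Mset_finite w).to_subtype
  rw [ncard_leftWeak_eq_ncard_isLowerSet w (· = k),
    ncard_leftWeak_eq_ncard_isLowerSet w (· + k = len w), ← ncard_Mset, ← Nat.card_coe_set_eq]
  exact ncard_isLowerSet_eq_of_antitone_equiv φ hφ k
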